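/- Let u and v be distinct vertices of an LWF chain graph G. Then u and v are adjacent in G if and only if there is no set Z ⊆ V∖{u,v} such that u and v are c-separated given Z. -/

import Mathlib

/- Formalization of LWF chain graphs, routes, sections, c-separation,
   minimal complexes, Markov blankets, moral graphs, and ancestral sets. -/

namespace LWF

/-- An LWF chain graph: a mixed graph with directed edges `dir` and (symmetric)
undirected edges `undir`, no loops, no pair of vertices joined by more than one
edge, and no partially directed cycles. -/
structure ChainGraph (V : Type*) where
  dir : V → V → Prop
  undir : V → V → Prop
  undir_symm : ∀ u v, undir u v → undir v u
  dir_irrefl : ∀ v, ¬ dir v v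
  undir_irrefl : ∀ v, ¬ undir v v
  dir_asymm : ∀ u v, dir u v → ¬ dir v u
  dir_not_undir : ∀ u v, dir u v → ¬ undir u v
  /-- No partially directed cycle: there is no sequence `ρ 0, …, ρ n` (`n ≥ 2`)
  with `ρ n = ρ 0`, the vertices `ρ 0, …, ρ (n-1)` distinct, every consecutive
  pair joined by `dir` or `undir` (in the forward direction), and at least one
  forward directed edge on it. -/
  no_partially_directed_cycle :
    ∀ (n : ℕ) (ρ : ℕ → V), 2 ≤ n → ρ n = ρ 0 →
      (∀ i j, i < j → j < n → ρ i ≠ ρ j) →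
      (∀ i, i < n → dir (ρ i) (ρ (i+1)) ∨ undir (ρ i) (ρ (i+1))) →
      ¬ ∃ i, i < n ∧ dir (ρ i) (ρ (i+1))

namespace ChainGraph

variable {V : Type*}

/-- Two vertices are adjacent if they are joined by a directed or an undirected edge. -/
def Adj (G : ChainGraph V) (u v : V) : Prop := G.dir u v ∨ G.dir v u ∨ G.undir u v

/-- A partially directed path from `u` to `w`: a sequence of distinct vertices,
each consecutive pair joined by a forward directed or an undirected edge, with
at least one directed edge on it. -/
def PDPath (G : ChainGraph V) (u w : V) : Prop :=
  ∃ (n : ℕ) (ρ : ℕ → V), 1 ≤ n ∧ ρ 0 = u ∧ ρ n = w ∧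
    (∀ i j, i ≤ n → j ≤ n → i ≠ j → ρ i ≠ ρ j) ∧
    (∀ i, i < n → G.dir (ρ i) (ρ (i+1)) ∨ G.undir (ρ i) (ρ (i+1))) ∧
    (∃ i, i < n ∧ G.dir (ρ i) (ρ (i+1)))

/-- `an(Z)`: the set of vertices having a partially directed path to some vertex of `Z`. -/
def anc (G : ChainGraph V) (Z : Set V) : Set V := {x | ∃ z ∈ Z, G.PDPath x z}

/-- Parents of `v`. -/
def pa (G : ChainGraph V) (v : V) : Set V := {u | G.dir u v}

/-- Children of `v`. -/
def ch (G : ChainGraph V) (v : V) : Set V := {u | G.dir v u}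

/-- Neighbours of `v`. -/
def nb (G : ChainGraph V) (v : V) : Set V := {u | G.undir u v}

/-- A minimal complex `a → ρ 1 − ⋯ − ρ n ← b` (with `ρ 0 = a`, `ρ (n+1) = b`,
`n ≥ 1`): all vertices distinct, the indicated edges present, and it is an
induced subgraph, i.e. the only adjacencies among its vertices are between
consecutive ones (in particular `a` and `b` are non-adjacent). -/
def IsMinimalComplex (G : ChainGraph V) (a b : V) (n : ℕ) (ρ : ℕ → V) : Prop :=
  1 ≤ n ∧ ρ 0 = a ∧ ρ (n+1) = b ∧
  (∀ i j, i ≤ n+1 → j ≤ n+1 → i ≠ j → ρ i ≠ ρ j) ∧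
  G.dir a (ρ 1) ∧ G.dir b (ρ n) ∧
  (∀ i, 1 ≤ i → i < n → G.undir (ρ i) (ρ (i+1))) ∧
  (∀ i j, i ≤ n+1 → j ≤ n+1 → G.Adj (ρ i) (ρ j) → j = i+1 ∨ i = j+1)

/-- Complex-spouses of `a`. -/
def csp (G : ChainGraph V) (a : V) : Set V := {b | ∃ n ρ, G.IsMinimalComplex a b n ρ}

/-- The Markov blanket of `T`: parents, neighbours, children and complex-spouses of `T`. -/
def mb (G : ChainGraph V) (T : V) : Set V := G.pa T ∪ G.nb T ∪ G.ch T ∪ G.csp T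

/-- A route in `G`: a sequence of `len + 1` vertices `vtx 0, …, vtx len`
(hence nonempty), each consecutive pair joined by an edge of `G`. -/
structure Route (G : ChainGraph V) where
  len : ℕ
  vtx : ℕ → V
  link : ∀ i, i < len → G.Adj (vtx i) (vtx (i+1))

/-- The positions `a, …, b` of the route form a section: all steps inside are
undirected edges, and the run is maximal on both sides. -/
def Route.IsSection {G : ChainGraph V} (ω : Route G) (a b : ℕ) : Prop :=
  a ≤ b ∧ b ≤ ω.len ∧
  (∀ k, a ≤ k → k < b → G.undir (ω.vtx k) (ω.vtx (k+1))) ∧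
  (0 < a → ¬ G.undir (ω.vtx (a-1)) (ω.vtx a)) ∧
  (b < ω.len → ¬ G.undir (ω.vtx b) (ω.vtx (b+1)))

/-- A collider section: a section which the route enters by an arrowhead at both
ends, i.e. `vtx (a-1) → vtx a − ⋯ − vtx b ← vtx (b+1)` occurs on the route. -/
def Route.IsColliderSection {G : ChainGraph V} (ω : Route G) (a b : ℕ) : Prop :=
  ω.IsSection a b ∧ 0 < a ∧ b < ω.len ∧
  G.dir (ω.vtx (a-1)) (ω.vtx a) ∧ G.dir (ω.vtx (b+1)) (ω.vtx b)

/-- A route is active with respect to `Z` if every collider section of it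
contains a vertex of `Z ∪ an(Z)` and no vertex of any non-collider section is in `Z`. -/
def Route.Active {G : ChainGraph V} (ω : Route G) (Z : Set V) : Prop :=
  (∀ a b, ω.IsColliderSection a b → ∃ k, a ≤ k ∧ k ≤ b ∧ ω.vtx k ∈ Z ∪ G.anc Z) ∧
  (∀ a b, ω.IsSection a b → ¬ ω.IsColliderSection a b →
    ∀ k, a ≤ k → k ≤ b → ω.vtx k ∉ Z)

/-- A route is intercepted (blocked) by `Z` if it is not active with respect to `Z`. -/
def Route.Intercepted {G : ChainGraph V} (ω : Route G) (Z : Set V) : Prop :=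
  ¬ ω.Active Z

/-- `X` and `Y` are c-separated given `Z`: every route between a vertex of `X`
and a vertex of `Y` is intercepted by `Z`. -/
def CSep (G : ChainGraph V) (X Y Z : Set V) : Prop :=
  ∀ ω : Route G,
    ((ω.vtx 0 ∈ X ∧ ω.vtx ω.len ∈ Y) ∨ (ω.vtx 0 ∈ Y ∧ ω.vtx ω.len ∈ X)) →
    ω.Intercepted Z

/-- Moral graph adjacency: distinct `u`, `v` are adjacent in `G^m` iff they are
adjacent in `G` or are complex-spouses. -/
def MoralAdj (G : ChainGraph V) (u v : V) : Prop :=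
  u ≠ v ∧ (G.dir u v ∨ G.dir v u ∨ G.undir u v ∨ u ∈ G.csp v ∨ v ∈ G.csp u)

/-- A set `A` is ancestral if it contains the boundary (parents and neighbours)
of each of its elements. -/
def Ancestral (G : ChainGraph V) (A : Set V) : Prop :=
  ∀ a ∈ A, ∀ u, (G.dir u a ∨ G.undir u a) → u ∈ A

/-- `An(A)`: the smallest ancestral set containing `A`. -/
def An (G : ChainGraph V) (A : Set V) : Set V :=
  ⋂₀ {B : Set V | A ⊆ B ∧ G.Ancestral B}

/-- A minimal complex of the induced subgraph `G_A`: a minimal complex of `G`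
all of whose vertices lie in `A`. -/
def IsMinimalComplexIn (G : ChainGraph V) (A : Set V) (a b : V) (n : ℕ) (ρ : ℕ → V) : Prop :=
  G.IsMinimalComplex a b n ρ ∧ ∀ i, i ≤ n+1 → ρ i ∈ A

/-- Adjacency in the moral graph `(G_A)^m` of the induced subgraph of `G` on `A`:
distinct `u, v ∈ A` joined by an edge of `G`, or complex-spouses in `G_A`. -/
def MoralAdjIn (G : ChainGraph V) (A : Set V) (u v : V) : Prop :=
  u ∈ A ∧ v ∈ A ∧ u ≠ v ∧
    (G.dir u v ∨ G.dir v u ∨ G.undir u v ∨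
      (∃ n ρ, G.IsMinimalComplexIn A u v n ρ) ∨ (∃ n ρ, G.IsMinimalComplexIn A v u n ρ))

end ChainGraph

/-- A path from `u` to `v` in an undirected graph with adjacency relation `R`:
a sequence of `n + 1 ≥ 2` distinct vertices `ρ 0 = u, …, ρ n = v` with each
consecutive pair adjacent. -/
def UPath {V : Type*} (R : V → V → Prop) (u v : V) (n : ℕ) (ρ : ℕ → V) : Prop :=
  1 ≤ n ∧ ρ 0 = u ∧ ρ n = v ∧
  (∀ i j, i ≤ n → j ≤ n → i ≠ j → ρ i ≠ ρ j) ∧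
  (∀ i, i < n → R (ρ i) (ρ (i+1)))

end LWF

/-! If `u` and `v` are adjacent, the one-edge route from `u` to `v` is active given any `Z`
avoiding them. Otherwise `Z = An({u, v}) ∖ {u, v}` separates them. On a route from `u` to `v`
active given `Z`, every collider section lies in `An({u, v})`, and every vertex of `An({u, v})`
on a non-collider section is `u` or `v`. Take the last visit to `u` on a non-collider section and
let `w` be the next vertex. The edge between them is neither `u − w` nor `u ← w`, as then `w`
would be `u` or `v`; so it is `u → w`. Then `w ∈ An({u, v})`: otherwise the route re-enters
`An({u, v})` later through an edge pointing out of it, and the stretch in between contains a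
collider section outside `An({u, v})`. So `w` starts a collider section `w − ⋯ ← x` with `x` on a
non-collider section in `An({u, v})`. As `x = u` would be a later visit, `x = v`; but `w` reaches
`u` or `v`, and `u → w`, resp. `v → ⋯`, closes a partially directed cycle. -/

namespace LWF

theorem exists_maximal_run (R : ℕ → Prop) {k n : ℕ} (hk : k ≤ n) :
    ∃ a b, a ≤ k ∧ k ≤ b ∧ b ≤ n ∧ (∀ i, a ≤ i → i < b → R i) ∧
      (0 < a → ¬ R (a - 1)) ∧ (b < n → ¬ R b) := by
  have left : ∀ k, ∃ a ≤ k, (∀ i, a ≤ i → i < k → R i) ∧ (0 < a → ¬ R (a - 1)) := by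
    intro k
    induction k with
    | zero => exact ⟨0, le_rfl, by omega, by omega⟩
    | succ k ih =>
      by_cases hk : R k
      · obtain ⟨a, hak, hrun, ha⟩ := ih
        refine ⟨a, by omega, fun i hai hik => ?_, ha⟩
        rcases Nat.lt_or_ge i k with h | h
        · exact hrun i hai h
        · rwa [show i = k by omega]
      · exact ⟨k + 1, le_rfl, by omega, fun _ => hk⟩
  have right : ∀ d k, k + d = n → ∃ b ≥ k, b ≤ n ∧ (∀ i, k ≤ i → i < b → R i) ∧
      (b < n → ¬ R b) := by
    intro d
    induction d with
    | zero => exact fun k hk => ⟨k, le_rfl, by omega, by omega, by omega⟩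
    | succ d ih =>
      intro k hk
      by_cases hRk : R k
      · obtain ⟨b, hkb, hbn, hrun, hb⟩ := ih (k + 1) (by omega)
        refine ⟨b, by omega, hbn, fun i hki hib => ?_, hb⟩
        rcases Nat.lt_or_ge k i with h | h
        · exact hrun i h hib
        · rwa [show i = k by omega]
      · exact ⟨k, le_rfl, by omega, by omega, fun _ => hRk⟩
  obtain ⟨a, hak, hrunl, ha⟩ := left k
  obtain ⟨b, hkb, hbn, hrunr, hb⟩ := right (n - k) k (by omega)
  refine ⟨a, b, hak, hkb, hbn, fun i hai hib => ?_, ha, hb⟩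
  rcases Nat.lt_or_ge i k with h | h
  · exact hrunl i hai h
  · exact hrunr i h hib

namespace ChainGraph

variable {V : Type*}

def Step (G : ChainGraph V) (a b : V) : Prop := G.dir a b ∨ G.undir a b

def Reach (G : ChainGraph V) : V → V → Prop := Relation.ReflTransGen G.Step

variable {G : ChainGraph V}

theorem Adj.symm {u v : V} (h : G.Adj u v) : G.Adj v u := by
  rcases h with h | h | h
  · exact Or.inr (Or.inl h)
  · exact Or.inl h
  · exact Or.inr (Or.inr (G.undir_symm _ _ h))

theorem Adj.ne {u v : V} (h : G.Adj u v) : u ≠ v := by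
  rintro rfl
  rcases h with h | h | h
  · exact G.dir_irrefl u h
  · exact G.dir_irrefl u h
  · exact G.undir_irrefl u h

theorem reach_of_steps {n : ℕ} {ρ : ℕ → V} (h : ∀ i < n, G.Step (ρ i) (ρ (i + 1))) :
    G.Reach (ρ 0) (ρ n) := by
  induction n with
  | zero => exact .refl
  | succ n ih => exact (ih fun i hi => h i (by omega)).tail (h n n.lt_succ_self)

theorem exists_injective_walk_of_reach {a b : V} (h : G.Reach a b) :
    ∃ (n : ℕ) (σ : ℕ → V), σ 0 = a ∧ σ n = b ∧ (∀ i < n, G.Step (σ i) (σ (i + 1))) ∧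
      ∀ i ≤ n, ∀ j ≤ n, σ i = σ j → i = j := by
  induction h with
  | refl => exact ⟨0, fun _ => a, rfl, rfl, by omega, by omega⟩
  | @tail y z _ hyz ih =>
    obtain ⟨n, σ, h0, hn, hstep, hinj⟩ := ih
    by_cases hz : ∃ i ≤ n, σ i = z
    · obtain ⟨i, hi, rfl⟩ := hz
      exact ⟨i, σ, h0, rfl, fun k hk => hstep k (by omega),
        fun k hk l hl => hinj k (by omega) l (by omega)⟩
    push Not at hz
    refine ⟨n + 1, fun k => if k ≤ n then σ k else z, by simp [h0], by simp, ?_, ?_⟩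
    · intro k hk
      rcases Nat.lt_or_ge k n with hkn | hkn
      · simpa [hkn.le, Nat.succ_le_of_lt hkn] using hstep k hkn
      · obtain rfl : k = n := by omega
        simpa [hn] using hyz
    · intro i hi j hj hij
      by_cases hin : i ≤ n <;> by_cases hjn : j ≤ n <;>
        simp only [hin, hjn, if_true, if_false] at hij
      · exact hinj i hin j hjn hij
      · exact absurd hij (hz i hin)
      · exact absurd hij.symm (hz j hjn)
      · omega

theorem not_reach_of_dir {a b : V} (hab : G.dir a b) : ¬ G.Reach b a := by
  intro h
  obtain ⟨n, σ, h0, hn, hstep, hinj⟩ := exists_injective_walk_of_reach h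
  have hn0 : n ≠ 0 := by
    rintro rfl
    obtain rfl : b = a := h0.symm.trans hn
    exact G.dir_irrefl b hab
  -- the cycle `a → σ 0 = b ⇝ σ n = a`
  refine G.no_partially_directed_cycle (n + 1) (fun k => if k = 0 then a else σ (k - 1))
    (by omega) (by simp [hn]) ?_ ?_ ⟨0, by omega, by simpa [h0] using hab⟩
  · intro i j hij hj
    obtain rfl | hi := Nat.eq_zero_or_pos i
    · simpa [show j ≠ 0 by omega, ← hn] using
        fun h => (show n ≠ j - 1 by omega) (hinj _ le_rfl _ (by omega) h)
    · simpa [show i ≠ 0 by omega, show j ≠ 0 by omega] using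
        fun h => (show i - 1 ≠ j - 1 by omega) (hinj _ (by omega) _ (by omega) h)
  · intro i hi
    obtain rfl | hi0 := Nat.eq_zero_or_pos i
    · simpa [h0] using Or.inl hab
    · simpa [Step, show i ≠ 0 by omega, show i - 1 + 1 = i by omega] using
        hstep (i - 1) (by omega)

theorem Ancestral.mem_of_reach {B : Set V} (hB : G.Ancestral B) {x y : V} (h : G.Reach x y)
    (hy : y ∈ B) : x ∈ B := by
  induction h using Relation.ReflTransGen.head_induction_on with
  | refl => exact hy
  | head hxz _ ih => exact hB _ ih _ hxz

theorem anc_subset {B Z : Set V} (hB : G.Ancestral B) (hZB : Z ⊆ B) : G.anc Z ⊆ B := by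
  rintro x ⟨z, hz, n, ρ, -, rfl, rfl, -, hstep, -⟩
  exact hB.mem_of_reach (reach_of_steps hstep) (hZB hz)

theorem subset_An (S : Set V) : S ⊆ G.An S :=
  fun _ hx => Set.mem_sInter.2 fun _ hB => hB.1 hx

theorem ancestral_An (S : Set V) : G.Ancestral (G.An S) :=
  fun a ha x hx => Set.mem_sInter.2 fun B hB => hB.2 a (Set.mem_sInter.1 ha B hB) x hx

theorem exists_reach_of_mem_An {S : Set V} {x : V} (hx : x ∈ G.An S) : ∃ s ∈ S, G.Reach x s :=
  Set.mem_sInter.1 hx {y | ∃ s ∈ S, G.Reach y s}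
    ⟨fun s hs => ⟨s, hs, .refl⟩, fun _ ⟨s, hs, h⟩ _ hy => ⟨s, hs, .head hy h⟩⟩

namespace Route

theorem exists_isSection (ω : G.Route) {k : ℕ} (hk : k ≤ ω.len) :
    ∃ a b, a ≤ k ∧ k ≤ b ∧ ω.IsSection a b := by
  obtain ⟨a, b, hak, hkb, hbn, hrun, ha, hb⟩ :=
    exists_maximal_run (fun i => G.undir (ω.vtx i) (ω.vtx (i + 1))) hk
  refine ⟨a, b, hak, hkb, by omega, hbn, hrun, fun h0 => ?_, hb⟩
  simpa [Nat.sub_add_cancel h0] using ha h0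

theorem IsSection.reach {ω : G.Route} {a b : ℕ} (hs : ω.IsSection a b) {i j : ℕ}
    (hai : a ≤ i) (hib : i ≤ b) (haj : a ≤ j) (hjb : j ≤ b) :
    G.Reach (ω.vtx i) (ω.vtx j) := by
  have both : ∀ i j, a ≤ i → i ≤ j → j ≤ b →
      G.Reach (ω.vtx i) (ω.vtx j) ∧ G.Reach (ω.vtx j) (ω.vtx i) := by
    intro i j hai hij
    induction j, hij using Nat.le_induction with
    | base => exact fun _ => ⟨.refl, .refl⟩
    | succ j hij ih =>
      intro hjb
      have hu := hs.2.2.1 j (by omega) (by omega)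
      obtain ⟨h₁, h₂⟩ := ih (by omega)
      exact ⟨h₁.tail (Or.inr hu), h₂.head (Or.inr (G.undir_symm _ _ hu))⟩
  rcases le_total i j with h | h
  · exact (both i j hai h hjb).1
  · exact (both j i haj h hib).2

theorem IsSection.eq_of_not_undir {ω : G.Route} {a b k : ℕ} (hs : ω.IsSection a b)
    (hak : a ≤ k) (hkb : k ≤ b) (hk : ¬ G.undir (ω.vtx (k - 1)) (ω.vtx k)) : a = k := by
  by_contra hne
  have hu := hs.2.2.1 (k - 1) (by omega) (by omega)
  rw [Nat.sub_add_cancel (show 1 ≤ k by omega)] at hu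
  exact hk hu

theorem IsSection.lt_of_undir {ω : G.Route} {a b k : ℕ} (hs : ω.IsSection a b) (hkb : k ≤ b)
    (hk : k < ω.len) (hu : G.undir (ω.vtx k) (ω.vtx (k + 1))) : k < b := by
  by_contra h
  obtain rfl : k = b := by omega
  exact hs.2.2.2.2 hk hu

theorem IsSection.not_isColliderSection_of_dir {ω : G.Route} {a b r : ℕ}
    (hs : ω.IsSection a b) (har : a ≤ r) (hrb : r ≤ b)
    (hd : G.dir (ω.vtx r) (ω.vtx (r - 1))) : ¬ ω.IsColliderSection a b := by
  obtain rfl : a = r :=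
    hs.eq_of_not_undir har hrb fun hu => G.dir_not_undir _ _ hd (G.undir_symm _ _ hu)
  exact fun hc => G.dir_asymm _ _ hd hc.2.2.2.1

/-- The collider section found is the one starting at the last forward arrowhead before `q`. -/
theorem exists_isColliderSection_of_dir_of_dir (ω : G.Route) {p q : ℕ} (hpq : p < q)
    (hq : q ≤ ω.len) (hp : G.dir (ω.vtx p) (ω.vtx (p + 1)))
    (hq' : G.dir (ω.vtx q) (ω.vtx (q - 1))) :
    ∃ a b, p < a ∧ b < q ∧ ω.IsColliderSection a b := by
  classical
  let P a := p < a ∧ G.dir (ω.vtx (a - 1)) (ω.vtx a)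
  have hP : P (p + 1) := ⟨by omega, by simpa using hp⟩
  obtain ⟨hpa, ha⟩ : P (Nat.findGreatest P q) := Nat.findGreatest_spec (m := p + 1) hpq hP
  have haq : Nat.findGreatest P q ≤ q := Nat.findGreatest_le q
  have hmax : ∀ r, Nat.findGreatest P q < r → r ≤ q → ¬ P r :=
    fun r h₁ h₂ => Nat.findGreatest_is_greatest h₁ h₂
  generalize Nat.findGreatest P q = a at hpa ha haq hmax
  have haq : a < q := lt_of_le_of_ne haq (by rintro rfl; exact G.dir_asymm _ _ hq' ha)
  obtain ⟨a', b, ha'a, hab, hs⟩ := ω.exists_isSection (show a ≤ ω.len by omega)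
  obtain rfl : a = a' := (hs.eq_of_not_undir ha'a hab (G.dir_not_undir _ _ ha)).symm
  have hbq : b < q := by
    by_contra h
    have hu := hs.2.2.1 (q - 1) (by omega) (by omega)
    rw [Nat.sub_add_cancel (show 1 ≤ q by omega)] at hu
    exact G.dir_not_undir _ _ hq' (G.undir_symm _ _ hu)
  refine ⟨a, b, hpa, hbq, hs, by omega, by omega, ha, ?_⟩
  rcases ω.link b (by omega) with h | h | h
  · exact absurd ⟨by omega, by simpa using h⟩ (hmax (b + 1) (by omega) (by omega))
  · exact h
  · exact absurd h (hs.2.2.2.2 (by omega))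

def InNonColliderSection (ω : G.Route) (k : ℕ) : Prop :=
  ∃ a b, a ≤ k ∧ k ≤ b ∧ ω.IsSection a b ∧ ¬ ω.IsColliderSection a b

theorem inNonColliderSection_zero (ω : G.Route) : ω.InNonColliderSection 0 := by
  obtain ⟨a, b, ha, hb, hs⟩ := ω.exists_isSection (Nat.zero_le _)
  exact ⟨a, b, ha, hb, hs, fun hc => by have := hc.2.1; omega⟩

theorem inNonColliderSection_of_dir (ω : G.Route) {r : ℕ} (hr : r ≤ ω.len)
    (hd : G.dir (ω.vtx r) (ω.vtx (r - 1))) : ω.InNonColliderSection r := by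
  obtain ⟨a, b, ha, hb, hs⟩ := ω.exists_isSection hr
  exact ⟨a, b, ha, hb, hs, hs.not_isColliderSection_of_dir ha hb hd⟩

theorem InNonColliderSection.succ_of_undir {ω : G.Route} {k : ℕ} (h : ω.InNonColliderSection k)
    (hk : k < ω.len) (hu : G.undir (ω.vtx k) (ω.vtx (k + 1))) :
    ω.InNonColliderSection (k + 1) := by
  obtain ⟨a, b, ha, hb, hs, hc⟩ := h
  exact ⟨a, b, by omega, hs.lt_of_undir hb hk hu, hs, hc⟩

theorem Active.not_mem_of_inNonColliderSection {ω : G.Route} {Z : Set V} (hact : ω.Active Z)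
    {k : ℕ} (h : ω.InNonColliderSection k) : ω.vtx k ∉ Z := by
  obtain ⟨a, b, ha, hb, hs, hc⟩ := h
  exact hact.2 a b hs hc k ha hb

theorem Active.mem_of_isColliderSection {ω : G.Route} {Z B : Set V} (hact : ω.Active Z)
    (hB : G.Ancestral B) (hZB : Z ⊆ B) {a b k : ℕ} (hc : ω.IsColliderSection a b)
    (hak : a ≤ k) (hkb : k ≤ b) : ω.vtx k ∈ B := by
  obtain ⟨k₀, hak₀, hk₀b, hk₀⟩ := hact.1 a b hc
  have hk₀B : ω.vtx k₀ ∈ B := hk₀.elim (fun h => hZB h) (fun h => anc_subset hB hZB h)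
  exact hB.mem_of_reach (hc.1.reach hak hkb hak₀ hk₀b) hk₀B

theorem Active.mem_of_dir {ω : G.Route} {Z B : Set V} (hact : ω.Active Z)
    (hB : G.Ancestral B) (hZB : Z ⊆ B) (hend : ω.vtx ω.len ∈ B) {p : ℕ} (hp : p < ω.len)
    (hd : G.dir (ω.vtx p) (ω.vtx (p + 1))) : ω.vtx (p + 1) ∈ B := by
  classical
  by_contra hp1
  have hex : ∃ q, p < q ∧ q ≤ ω.len ∧ ω.vtx q ∈ B := ⟨_, hp, le_rfl, hend⟩
  obtain ⟨hpq, hq, hqB⟩ := Nat.find_spec hex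
  have hout : ∀ r, p < r → r < Nat.find hex → ω.vtx r ∉ B :=
    fun r h₁ h₂ hr => Nat.find_min hex h₂ ⟨h₁, by omega, hr⟩
  generalize Nat.find hex = q at hpq hq hqB hout
  have hq1 : p + 1 < q := lt_of_le_of_ne hpq (by rintro rfl; exact hp1 hqB)
  have hq1B : ω.vtx (q - 1) ∉ B := hout (q - 1) (by omega) (by omega)
  have hdq : G.dir (ω.vtx q) (ω.vtx (q - 1)) := by
    have hlink := ω.link (q - 1) (by omega)
    rw [Nat.sub_add_cancel (show 1 ≤ q by omega)] at hlink
    rcases hlink with h | h | h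
    · exact absurd (hB _ hqB _ (Or.inl h)) hq1B
    · exact h
    · exact absurd (hB _ hqB _ (Or.inr h)) hq1B
  obtain ⟨a, b, hpa, hbq, hc⟩ := ω.exists_isColliderSection_of_dir_of_dir hq1.le hq hd hdq
  have hab := hc.1.1
  exact hout a hpa (by omega) (hact.mem_of_isColliderSection hB hZB hc le_rfl hab)

def ofAdj {u v : V} (h : G.Adj u v) : G.Route where
  len := 1
  vtx k := if k = 0 then u else v
  link k hk := by
    obtain rfl : k = 0 := by omega
    simpa using h

theorem ofAdj_active {u v : V} (h : G.Adj u v) {Z : Set V} (hu : u ∉ Z) (hv : v ∉ Z) :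
    (ofAdj h).Active Z := by
  refine ⟨fun a b hc => ?_, fun a b _ _ k _ _ => ?_⟩
  · obtain ⟨⟨hab, -⟩, ha, hb, -⟩ := hc
    change b < 1 at hb
    omega
  · change (if k = 0 then u else v) ∉ Z
    split_ifs
    exacts [hu, hv]

end Route

theorem exists_later_visit {u v : V} (hna : ¬ G.Adj u v) {ω : G.Route}
    (hend : ω.vtx ω.len = v) (hact : ω.Active (G.An {u, v} \ {u, v})) {p : ℕ} (hp : p < ω.len)
    (hpu : ω.vtx p = u) (hpn : ω.InNonColliderSection p) :
    ∃ p', p < p' ∧ p' ≤ ω.len ∧ ω.vtx p' = u ∧ ω.InNonColliderSection p' := by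
  set A := G.An {u, v}
  have hA : G.Ancestral A := ancestral_An _
  have huA : u ∈ A := subset_An _ (by simp)
  have hvA : v ∈ A := subset_An _ (by simp)
  have hw : ω.vtx (p + 1) ∉ ({u, v} : Set V) := by
    have hadj : G.Adj u (ω.vtx (p + 1)) := hpu ▸ ω.link p hp
    rintro (h | h)
    · exact hadj.ne h.symm
    · exact hna (h ▸ hadj)
  have hw_out : ω.InNonColliderSection (p + 1) → ω.vtx (p + 1) ∉ A :=
    fun h hwA => hact.not_mem_of_inNonColliderSection h ⟨hwA, hw⟩
  rcases ω.link p hp with hd | hd | hu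
  · have hwA : ω.vtx (p + 1) ∈ A := hact.mem_of_dir hA Set.sdiff_subset (hend ▸ hvA) hp hd
    obtain ⟨a, b, hap, hpb, hs⟩ := ω.exists_isSection (show p + 1 ≤ ω.len by omega)
    obtain rfl : a = p + 1 := hs.eq_of_not_undir hap hpb (by simpa using G.dir_not_undir _ _ hd)
    by_cases hc : ω.IsColliderSection (p + 1) b
    · obtain ⟨-, -, hb, -, hdb⟩ := id hc
      have hb1 : ω.InNonColliderSection (b + 1) :=
        ω.inNonColliderSection_of_dir hb (by simpa using hdb)
      have hbA := hact.mem_of_isColliderSection hA Set.sdiff_subset hc hpb le_rfl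
      by_cases hbu : ω.vtx (b + 1) = u
      · exact ⟨b + 1, by omega, hb, hbu, hb1⟩
      exfalso
      have hbv : ω.vtx (b + 1) = v := by
        by_contra hbv
        exact hact.not_mem_of_inNonColliderSection hb1
          ⟨hA _ hbA _ (Or.inl hdb), by simp [hbu, hbv]⟩
      obtain ⟨s, rfl | rfl, hws⟩ := exists_reach_of_mem_An hwA
      · exact not_reach_of_dir (hpu ▸ hd) hws
      · exact not_reach_of_dir (hbv ▸ hdb) ((hs.reach hpb le_rfl le_rfl hpb).trans hws)
    · exact absurd hwA (hw_out ⟨_, b, le_rfl, hpb, hs, hc⟩)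
  · exact absurd (hA _ (hpu ▸ huA) _ (Or.inl hd))
      (hw_out (ω.inNonColliderSection_of_dir hp (by simpa using hd)))
  · exact absurd (hA _ (hpu ▸ huA) _ (Or.inr (G.undir_symm _ _ hu)))
      (hw_out (hpn.succ_of_undir hp hu))

theorem not_active_of_not_adj {u v : V} (huv : u ≠ v) (hna : ¬ G.Adj u v) {ω : G.Route}
    (hstart : ω.vtx 0 = u) (hend : ω.vtx ω.len = v) :
    ¬ ω.Active (G.An {u, v} \ {u, v}) := by
  classical
  intro hact
  let P k := ω.vtx k = u ∧ ω.InNonColliderSection k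
  have hP : P (Nat.findGreatest P ω.len) :=
    Nat.findGreatest_spec (Nat.zero_le _) ⟨hstart, ω.inNonColliderSection_zero⟩
  have hlt : Nat.findGreatest P ω.len < ω.len :=
    lt_of_le_of_ne (Nat.findGreatest_le _) fun h => huv (by rw [← hP.1, h, hend])
  obtain ⟨p', hp', hp'len, hP'⟩ := exists_later_visit hna hend hact hlt hP.1 hP.2
  exact Nat.findGreatest_is_greatest hp' hp'len hP'

end ChainGraph

theorem adj_iff_no_separator_general {V : Type*} (G : ChainGraph V)
    (u v : V) (huv : u ≠ v) :
    G.Adj u v ↔ ¬ ∃ Z : Set V, u ∉ Z ∧ v ∉ Z ∧ G.CSep {u} {v} Z := by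
  constructor
  · rintro hadj ⟨Z, huZ, hvZ, hsep⟩
    exact hsep (.ofAdj hadj) (Or.inl ⟨rfl, rfl⟩) (ChainGraph.Route.ofAdj_active hadj huZ hvZ)
  · intro hno
    by_contra hna
    refine hno ⟨G.An {u, v} \ {u, v}, fun h => h.2 (by simp), fun h => h.2 (by simp), ?_⟩
    rintro ω (⟨h0, hl⟩ | ⟨h0, hl⟩)
    · exact ChainGraph.not_active_of_not_adj huv hna h0 hl
    · rw [Set.pair_comm]
      exact ChainGraph.not_active_of_not_adj huv.symm (mt ChainGraph.Adj.symm hna) h0 hl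

/-- Distinct vertices `u` and `v` of an LWF chain graph `G`
are adjacent in `G` if and only if there is no set `Z ⊆ V ∖ {u, v}` such that
`u` and `v` are c-separated given `Z`. -/
theorem adj_iff_no_separator {V : Type*} [Fintype V] (G : ChainGraph V)
    (u v : V) (huv : u ≠ v) :
    G.Adj u v ↔ ¬ ∃ Z : Set V, u ∉ Z ∧ v ∉ Z ∧ G.CSep {u} {v} Z :=
  adj_iff_no_separator_general G u v huv

end LWF
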